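/- Let S = {p₁ < p₂ < ⋯} be a set of primes of positive (natural) density c > 0 and let (cₙ) be real numbers. Suppose the mathematical expectations E(νₙ) = (1/n)∑_{i=1}^{n} c_i/p_i converge to a real number ℓ. If ℓ ≠ 0, then the series ∑_{n>0} cₙ/pₙ² diverges. -/

import Mathlib

/-!
Write `S n = ∑_{i<n} c i / p i`, so that `S n ≈ ℓ n`, and `b n = 1 / p n`, which is antitone.
For `ℓ > 0` we have `S n ≥ (ℓ/2) n - C`, so Abel summation of
`∑_{n<N} c n / p n ^ 2 = ∑_{n<N} (S (n+1) - S n) b n` against the antitone `b` bounds it below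
by `(ℓ/2) ∑_{n<N} b n - C b 0`. Positive density gives `p N ≍ N log p N`, hence
`p N = O(N log N)`, and `∑ 1 / (n log n)` diverges by Cauchy condensation; so `∑ b n = ∞`.
-/

open Filter Finset Real Topology

theorem Real.not_summable_inv_natCast_mul_log :
    ¬ Summable (fun n : ℕ => ((n : ℝ) * log n)⁻¹) := by
  have hlog2 : 0 < log 2 := log_pos one_lt_two
  rw [← summable_condensed_iff_of_eventually_nonneg (.of_forall fun n => by positivity)]
  · intro h
    refine not_summable_natCast_inv ((summable_mul_left_iff (inv_ne_zero hlog2.ne')).mp ?_)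
    refine h.congr fun k => ?_
    push_cast
    rw [log_pow, mul_inv, mul_inv, ← mul_assoc, mul_inv_cancel₀ (by positivity), one_mul, mul_comm]
  · filter_upwards [eventually_ge_atTop 2] with n hn
    have : (2 : ℝ) ≤ n := by exact_mod_cast hn
    have : 0 < log n := log_pos (by linarith)
    push_cast
    gcongr <;> linarith

theorem Real.log_le_two_mul_log_of_le_mul_log {x K : ℝ} (hx : 0 < x) (hK : 0 ≤ K)
    (h : x ≤ K * log x) : log x ≤ 2 * log (2 * K) := by
  have hs : 0 < √x := sqrt_pos.mpr hx
  have hlog : log x = 2 * log √x := by rw [log_sqrt hx.le]; ring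
  have hlog_le : log x ≤ 2 * √x := by linarith [log_le_sub_one_of_pos hs]
  have hsqrt : √x ≤ 2 * K := by
    refine le_of_mul_le_mul_right ?_ hs
    nlinarith [mul_self_sqrt hx.le]
  rw [hlog]
  gcongr

theorem eventually_le_mul_log_of_tendsto {x : ℕ → ℝ} {d : ℝ} (hx : ∀ n, 0 < x n) (hd : 0 < d)
    (h : Tendsto (fun N : ℕ => (N + 1) * log (x N) / x N) atTop (𝓝 d)) :
    ∀ᶠ N : ℕ in atTop, x N ≤ 8 / d * ((N + 1) * log (N + 1)) := by
  filter_upwards [h.eventually (eventually_ge_nhds (half_lt_self hd)),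
    eventually_ge_atTop ⌈4 / d⌉₊] with N hN hN'
  set m : ℝ := N + 1
  have hm : 4 / d ≤ m := by
    have := Nat.ceil_le.mp hN'
    simp only [m]
    linarith
  have hupper : x N ≤ 2 / d * m * log (x N) := by
    rw [le_div_iff₀ (hx N)] at hN
    rw [div_mul_eq_mul_div, div_mul_eq_mul_div, le_div_iff₀ hd]
    linarith
  have hlog : log (x N) ≤ 4 * log m := by
    calc log (x N) ≤ 2 * log (2 * (2 / d * m)) :=
          log_le_two_mul_log_of_le_mul_log (hx N) (by positivity) hupper
      _ ≤ 2 * log (m ^ 2) := by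
          gcongr
          rw [sq, show 2 * (2 / d * m) = 4 / d * m by ring]
          gcongr
      _ = 4 * log m := by rw [log_pow]; push_cast; ring
  calc x N ≤ 2 / d * m * log (x N) := hupper
    _ ≤ 2 / d * m * (4 * log m) := by gcongr
    _ = 8 / d * (m * log m) := by ring

theorem not_summable_inv_of_tendsto {x : ℕ → ℝ} {d : ℝ} (hx : ∀ n, 0 < x n) (hd : 0 < d)
    (h : Tendsto (fun N : ℕ => (N + 1) * log (x N) / x N) atTop (𝓝 d)) :
    ¬ Summable (fun n => (x n)⁻¹) := by
  intro hs
  refine Real.not_summable_inv_natCast_mul_log ((summable_nat_add_iff 1).mp ?_)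
  refine (hs.mul_left (8 / d)).of_norm_bounded_eventually_nat ?_
  filter_upwards [eventually_le_mul_log_of_tendsto hx hd h, eventually_ge_atTop 1] with N hN hN₁
  have : (1 : ℝ) ≤ N := by exact_mod_cast hN₁
  have hpos : 0 < ((N + 1 : ℕ) : ℝ) * log (N + 1 : ℕ) :=
    mul_pos (by positivity) (log_pos (by push_cast; linarith))
  rw [norm_of_nonneg (inv_nonneg.mpr hpos.le), ← div_eq_mul_inv, le_div_iff₀ (hx N)]
  rw [inv_mul_le_iff₀ hpos]
  push_cast at hpos ⊢
  linarith

theorem natCard_setOf_le_apply {p : ℕ → ℕ} (hmono : StrictMono p) (N : ℕ) :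
    Nat.card {n : ℕ | (p n : ℝ) ≤ p N} = N + 1 := by
  have : {n : ℕ | (p n : ℝ) ≤ p N} = Set.Iic N := by
    ext n
    simp [hmono.le_iff_le]
  rw [this, Nat.card_coe_set_eq, Set.ncard_Iic_nat]

theorem tendsto_sum_inv_atTop_of_density {p : ℕ → ℕ} (hp : ∀ n, 0 < p n) (hmono : StrictMono p)
    {d : ℝ} (hd : 0 < d)
    (hdens : Tendsto (fun t : ℝ => (Nat.card {n : ℕ | (p n : ℝ) ≤ t} : ℝ) * log t / t)
      atTop (𝓝 d)) :
    Tendsto (fun N => ∑ n ∈ range N, (p n : ℝ)⁻¹) atTop atTop := by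
  have hcount : Tendsto (fun N : ℕ => (N + 1) * log (p N) / p N) atTop (𝓝 d) := by
    convert hdens.comp (tendsto_natCast_atTop_atTop.comp hmono.tendsto_atTop) using 2 with N
    simp only [Function.comp_apply, natCard_setOf_le_apply hmono]
    push_cast
    rfl
  rw [← not_summable_iff_tendsto_nat_atTop_of_nonneg (fun n => by positivity)]
  exact not_summable_inv_of_tendsto (fun n => by exact_mod_cast hp n) hd hcount

theorem Antitone.mul_sub_mul_le_sum_range_sub_mul {b D : ℕ → ℝ} (hb : Antitone b)
    (hD : ∀ n, 0 ≤ D n) (N : ℕ) :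
    D N * b N - D 0 * b 0 ≤ ∑ n ∈ range N, (D (n + 1) - D n) * b n := by
  induction N with
  | zero => simp
  | succ N ih =>
    have := mul_le_mul_of_nonneg_left (hb N.le_succ) (hD (N + 1))
    rw [sum_range_succ]
    linarith

theorem exists_mul_sub_le_sum_range_of_tendsto_div {a : ℕ → ℝ} {ℓ κ : ℝ} (hκ : κ < ℓ)
    (ha : Tendsto (fun n : ℕ => (∑ i ∈ range n, a i) / n) atTop (𝓝 ℓ)) :
    ∃ C, ∀ n : ℕ, κ * n - C ≤ ∑ i ∈ range n, a i := by
  have hev : ∀ᶠ n : ℕ in atTop, κ * n - ∑ i ∈ range n, a i ≤ 0 := by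
    filter_upwards [ha.eventually (eventually_gt_nhds hκ), eventually_gt_atTop 0] with n hn hn0
    rw [lt_div_iff₀ (by exact_mod_cast hn0)] at hn
    linarith
  obtain ⟨C, hC⟩ := (isBoundedUnder_of_eventually_le hev).bddAbove_range
  exact ⟨C, fun n => by linarith [hC ⟨n, rfl⟩]⟩

theorem Antitone.tendsto_atTop_sum_range_mul {a b : ℕ → ℝ} {ℓ : ℝ} (hb : Antitone b)
    (hb₀ : ∀ n, 0 ≤ b n) (hB : Tendsto (fun N => ∑ n ∈ range N, b n) atTop atTop) (hℓ : 0 < ℓ)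
    (ha : Tendsto (fun n : ℕ => (∑ i ∈ range n, a i) / n) atTop (𝓝 ℓ)) :
    Tendsto (fun N => ∑ n ∈ range N, a n * b n) atTop atTop := by
  obtain ⟨C, hC⟩ := exists_mul_sub_le_sum_range_of_tendsto_div (half_lt_self hℓ) ha
  set D : ℕ → ℝ := fun n => ∑ i ∈ range n, a i - ℓ / 2 * n + C
  have hD : ∀ n, 0 ≤ D n := fun n => by simp only [D]; linarith [hC n]
  have hlower : ∀ N, ℓ / 2 * ∑ n ∈ range N, b n - C * b 0 ≤ ∑ n ∈ range N, a n * b n := by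
    intro N
    have habel := hb.mul_sub_mul_le_sum_range_sub_mul hD N
    have hstep : ∀ n, (D (n + 1) - D n) * b n = a n * b n - ℓ / 2 * b n := by
      intro n
      simp only [D, sum_range_succ]
      push_cast
      ring
    simp only [hstep, sum_sub_distrib, ← mul_sum] at habel
    have hD₀ : D 0 = C := by simp [D]
    rw [hD₀] at habel
    linarith [mul_nonneg (hD N) (hb₀ N)]
  exact tendsto_atTop_mono hlower
    (tendsto_atTop_add_const_right _ _ (hB.const_mul_atTop (half_pos hℓ)))

theorem Antitone.not_tendsto_nhds_sum_range_mul {a b : ℕ → ℝ} {ℓ : ℝ} (hb : Antitone b)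
    (hb₀ : ∀ n, 0 ≤ b n) (hB : Tendsto (fun N => ∑ n ∈ range N, b n) atTop atTop) (hℓ : ℓ ≠ 0)
    (ha : Tendsto (fun n : ℕ => (∑ i ∈ range n, a i) / n) atTop (𝓝 ℓ)) (l : ℝ) :
    ¬ Tendsto (fun N => ∑ n ∈ range N, a n * b n) atTop (𝓝 l) := by
  intro hl
  rcases hℓ.lt_or_gt with hneg | hpos
  · have hneg_avg : Tendsto (fun n : ℕ => (∑ i ∈ range n, -a i) / n) atTop (𝓝 (-ℓ)) := by
      simpa only [sum_neg_distrib, neg_div] using ha.neg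
    have := hb.tendsto_atTop_sum_range_mul hb₀ hB (neg_pos.mpr hneg) hneg_avg
    simp only [neg_mul, sum_neg_distrib] at this
    exact not_tendsto_atTop_of_tendsto_nhds hl.neg this
  · exact not_tendsto_atTop_of_tendsto_nhds hl (hb.tendsto_atTop_sum_range_mul hb₀ hB hpos ha)

/-- If the primes `p n` have positive natural density `d` and the expectations
`(1/n) ∑_{i<n} c i / p i` converge to a nonzero limit `ℓ`, then the series
`∑ c n / p n ^ 2` diverges. -/
theorem series_diverges_of_nonzero_expectation_limit
    (p : ℕ → ℕ) (hp : ∀ n, (p n).Prime) (hmono : StrictMono p)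
    (d : ℝ) (hd : 0 < d)
    (hdens : Tendsto
      (fun t : ℝ => (Nat.card {n : ℕ | (p n : ℝ) ≤ t} : ℝ) * Real.log t / t)
      atTop (nhds d))
    (c : ℕ → ℝ) (ℓ : ℝ) (hℓ : ℓ ≠ 0)
    (hexp : Tendsto (fun n : ℕ => (∑ i ∈ Finset.range n, c i / (p i : ℝ)) / n)
      atTop (nhds ℓ)) :
    ¬ ∃ l : ℝ, Tendsto (fun N => ∑ n ∈ Finset.range N, c n / (p n : ℝ) ^ 2)
      atTop (nhds l) := by
  rintro ⟨l, hl⟩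
  have hp₀ : ∀ n, 0 < p n := fun n => (hp n).pos
  have hb : Antitone fun n => (p n : ℝ)⁻¹ := fun m n hmn =>
    inv_anti₀ (by exact_mod_cast hp₀ m) (by exact_mod_cast hmono.monotone hmn)
  have hsplit : ∀ n, c n / (p n : ℝ) ^ 2 = c n / p n * (p n : ℝ)⁻¹ := fun n => by
    rw [sq, ← div_div, div_eq_mul_inv]
  simp only [hsplit] at hl
  exact hb.not_tendsto_nhds_sum_range_mul (fun n => by positivity)
    (tendsto_sum_inv_atTop_of_density hp₀ hmono hd hdens) hℓ hexp l hl
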